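/- arXiv:1105.2849 — 3 statements merged into one kernel-verified Lean document; each statement's English description precedes it below -/
import Mathlib

section
/- Let w = ∏_{i≥0} 0²1^{t_i+2}, with t_i the Thue–Morse sequence. Then w contains no factor of the form x·x·g(x)·x, where x is a nonempty binary word and g(x) is the reverse complement of x (reverse x, then swap 0↔1). -/
def tm (i : Nat) : Nat := (Nat.digits 2 i).sum % 2

/-- Block `0 0 1^(t_i+2)` of the word **w**. -/
def wBlock (i : Nat) : List Bool := [false, false] ++ List.replicate (tm i + 2) true

/-- Prefix of **w** made of the first `n` blocks. -/
def wPrefix (n : Nat) : List Bool := ((List.range n).map wBlock).flatten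

/-- `L` is a factor of the infinite word **w**. -/
def IsFactorW (L : List Bool) : Prop := ∃ n, L <:+: wPrefix n


lemma tm_le (i : Nat) : tm i ≤ 1 := Nat.lt_succ_iff.mp (Nat.mod_lt _ (by norm_num))

lemma tm_pair (j : Nat) : tm (2*j) ≠ tm (2*j+1) := by
  rcases Nat.eq_zero_or_pos j with h | h
  · subst h
    have d : Nat.digits 2 1 = (1%2) :: Nat.digits 2 (1/2) := Nat.digits_def' (by norm_num) (by omega)
    simp at d
    simp [tm, d]
  · have d1 : Nat.digits 2 (2*j) = (2*j%2) :: Nat.digits 2 (2*j/2) := Nat.digits_def' (by norm_num) (by omega)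
    have d2 : Nat.digits 2 (2*j+1) = ((2*j+1)%2) :: Nat.digits 2 ((2*j+1)/2) := Nat.digits_def' (by norm_num) (by omega)
    rw [show 2*j%2 = 0 by omega, show 2*j/2 = j by omega] at d1
    rw [show (2*j+1)%2 = 1 by omega, show (2*j+1)/2 = j by omega] at d2
    unfold tm
    rw [d1, d2]
    simp [List.sum_cons]
    omega

lemma tm3 (i : Nat) : ¬ (tm i = tm (i+1) ∧ tm (i+1) = tm (i+2)) := by
  rcases Nat.even_or_odd i with ⟨j, hj⟩ | ⟨j, hj⟩
  · have := tm_pair j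
    rintro ⟨h1, h2⟩
    apply this; rw [show 2*j = i by omega]; exact h1
  · have := tm_pair (j+1)
    rintro ⟨h1, h2⟩
    apply this; rw [show 2*(j+1) = i+1 by omega]; exact h2


def seg4 (i : Nat) : List Bool := wBlock i ++ wBlock (i+1) ++ wBlock (i+2) ++ wBlock (i+3)

lemma wPrefix_succ (n : Nat) : wPrefix (n+1) = wPrefix n ++ wBlock n := by
  simp [wPrefix, List.range_succ]

lemma wPrefix_add4 (m : Nat) : wPrefix (m+4) = wPrefix m ++ seg4 m := by
  rw [show m+4 = (m+3)+1 by ring, wPrefix_succ, show m+3 = (m+2)+1 by ring, wPrefix_succ,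
    show m+2 = (m+1)+1 by ring, wPrefix_succ, wPrefix_succ, seg4]
  simp [List.append_assoc]

lemma wPrefix_add3 (m : Nat) : wPrefix (m+3) = wPrefix m ++ (wBlock m ++ wBlock (m+1) ++ wBlock (m+2)) := by
  rw [show m+3 = (m+2)+1 by ring, wPrefix_succ, show m+2 = (m+1)+1 by ring, wPrefix_succ,
    wPrefix_succ]
  simp [List.append_assoc]

lemma wPrefix_prefix {m n : Nat} (h : m ≤ n) : wPrefix m <+: wPrefix n := by
  induction n with
  | zero => simp at h; simp [h]
  | succ n ih =>
    rcases Nat.lt_or_ge m (n+1) with h' | h'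
    · exact (ih (by omega)).trans ⟨wBlock n, (wPrefix_succ n).symm⟩
    · rw [show m = n+1 by omega]

lemma block_len (i : Nat) : (wBlock i).length = tm i + 4 := by
  simp only [wBlock, List.length_append, List.length_replicate, List.length_cons, List.length_nil]
  omega

lemma wPrefix4_eq : wPrefix 4 = seg4 0 := by
  rw [show (4:ℕ) = 0+4 from rfl, wPrefix_add4]
  simp [wPrefix]

lemma win13 (n : Nat) : ∀ u : List Bool, u.length ≤ 13 → u <:+: wPrefix n → ∃ i, u <:+: seg4 i := by
  induction n with
  | zero =>
    intro u _ hinf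
    refine ⟨0, ?_⟩
    have : u = [] := List.eq_nil_of_infix_nil hinf
    simp [this]
  | succ n ih =>
    intro u hlen hinf
    by_cases h4 : n + 1 ≤ 4
    · refine ⟨0, ?_⟩
      rw [← wPrefix4_eq]
      exact hinf.trans (wPrefix_prefix h4).isInfix
    · obtain ⟨m, rfl⟩ : ∃ m, n = m + 4 := ⟨n - 4, by omega⟩
      obtain ⟨s, t, hst⟩ := hinf
      have hst' : s ++ u ++ t = wPrefix (m+4) ++ wBlock (m+4) := by
        rw [← wPrefix_succ]; exact hst
      by_cases hcase : s.length + u.length ≤ (wPrefix (m+4)).length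
      · refine ih u hlen ?_
        have := congrArg (List.take (wPrefix (m+4)).length) hst'
        rw [List.take_left] at this
        rw [show s ++ u ++ t = (s ++ u) ++ t by simp, List.take_append,
          List.take_of_length_le (by simpa using hcase)] at this
        exact ⟨s, _, by rw [← this, List.append_assoc]⟩
      · -- crossing: u lies in seg4 (m+1)
        have e5 : wPrefix (m+4+1) = wPrefix (m+1) ++ seg4 (m+1) := by
          rw [show m+4+1 = (m+1)+4 by ring, wPrefix_add4]
        have hlenA : (wPrefix (m+1)).length + 12 ≤ (wPrefix (m+4)).length := by
          rw [show m+4 = (m+1)+3 by ring, wPrefix_add3]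
          simp [block_len]
          omega
        have hs : (wPrefix (m+1)).length ≤ s.length := by omega
        refine ⟨m+1, ?_⟩
        have hst2 : s ++ u ++ t = wPrefix (m+1) ++ seg4 (m+1) := by
          rw [← e5]; exact hst
        have hdrop := congrArg (List.drop s.length) hst2
        rw [show s ++ u ++ t = s ++ (u ++ t) by simp, List.drop_left,
          List.drop_append, List.drop_of_length_le hs] at hdrop
        simp at hdrop
        have : u <+: (seg4 (m+1)).drop (s.length - (wPrefix (m+1)).length) := ⟨t, hdrop⟩
        exact this.isInfix.trans (List.drop_suffix _ _).isInfix

def A13 : List Bool := [false,false,true,true,false,false,true,true,false,false,true,true,false]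
def Blist : List (List Bool) :=
  [[false,false,false],[false,true,false],[true,false,true],[true,true,true,true], A13]

lemma goodSeg (i : Nat) : ∀ u ∈ Blist, ¬ u <:+: seg4 i := by
  have t1 := tm3 i
  have t2 := tm3 (i+1)
  unfold seg4 wBlock
  rcases Nat.le_one_iff_eq_zero_or_eq_one.mp (tm_le i) with e0|e0 <;>
  rcases Nat.le_one_iff_eq_zero_or_eq_one.mp (tm_le (i+1)) with e1|e1 <;>
  rcases Nat.le_one_iff_eq_zero_or_eq_one.mp (tm_le (i+2)) with e2|e2 <;>
  rcases Nat.le_one_iff_eq_zero_or_eq_one.mp (tm_le (i+3)) with e3|e3 <;>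
  simp only [e0, e1, e2, e3, show i+1+1 = i+2 by ring, show i+1+2 = i+3 by ring] <;>
  first
    | omega
    | decide


lemma triple (l : List Bool) (j : ℕ) (h : j + 2 < l.length) :
    [l[j]'(by omega), l[j+1]'(by omega), l[j+2]'h] <:+: l := by
  have d0 : l.drop j = l[j]'(by omega) :: l.drop (j+1) := List.drop_eq_getElem_cons (by omega)
  have d1 : l.drop (j+1) = l[j+1]'(by omega) :: l.drop (j+2) := List.drop_eq_getElem_cons (by omega)
  have d2 : l.drop (j+2) = l[j+2]'h :: l.drop (j+3) := List.drop_eq_getElem_cons h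
  have hp : [l[j]'(by omega), l[j+1]'(by omega), l[j+2]'h] <+: l.drop j := by
    rw [d0, d1, d2]; exact ⟨l.drop (j+3), rfl⟩
  exact hp.isInfix.trans (List.drop_suffix _ _).isInfix

def patF (a b : Bool) (j : ℕ) : Bool :=
  if j % 4 = 0 then a else if j % 4 = 1 then b else if j % 4 = 2 then !a else !b

lemma pat_step (a b : Bool) (j : ℕ) : patF a b (j+2) = !(patF a b j) := by
  rcases (by omega : j % 4 = 0 ∨ j % 4 = 1 ∨ j % 4 = 2 ∨ j % 4 = 3) with h|h|h|h <;>
    simp [patF, h, Nat.add_mod, show (j % 4 + 2) % 4 = (j%4+2)%4 from rfl]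

lemma xpat (x : List Bool) (a b : Bool) (hab : 2 ≤ x.length)
    (h0 : x[0]'(by omega) = a) (h1 : x[1]'(by omega) = b)
    (h2 : ∀ j, (hj : j + 2 < x.length) → x[j+2]'hj = !(x[j]'(by omega))) :
    ∀ j, (hj : j < x.length) → x[j]'hj = patF a b j := by
  intro j
  induction j using Nat.strong_induction_on with
  | _ j ih =>
    intro hj
    match j with
    | 0 => simpa [patF] using h0
    | 1 => simpa [patF] using h1
    | (k+2) =>
      rw [h2 k hj, ih k (by omega) (by omega), pat_step]

lemma take_eq (x : List Bool) (a b : Bool) (m : ℕ) (hm : m ≤ x.length)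
    (hp : ∀ j, (hj : j < x.length) → x[j]'hj = patF a b j) :
    x.take m = (List.range m).map (patF a b) := by
  apply List.ext_getElem
  · simp; omega
  · intro j hj hj'
    simp only [List.getElem_take, List.getElem_map, List.getElem_range]
    exact hp j (by simp at hj; omega)


theorem stmt10 (x : List Bool) (hx : x ≠ []) :
    ¬ IsFactorW (x ++ x ++ (List.map (fun b => !b) x).reverse ++ x) := by
  rintro ⟨n, hF⟩
  have Blen : ∀ u ∈ Blist, u.length ≤ 13 := by decide
  have K : ∀ u ∈ Blist, ¬ u <:+: (x ++ x ++ (List.map (fun b => !b) x).reverse ++ x) := by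
    intro u hu hinf
    obtain ⟨i, hi⟩ := win13 n u (Blen u hu) (hinf.trans hF)
    exact goodSeg i u hu hi
  have hxF : x <:+: (x ++ x ++ (List.map (fun b => !b) x).reverse ++ x) :=
    ⟨[], x ++ (List.map (fun b => !b) x).reverse ++ x, by simp⟩
  have hgF : (List.map (fun b => !b) x).reverse <:+:
      (x ++ x ++ (List.map (fun b => !b) x).reverse ++ x) :=
    ⟨x ++ x, x, by simp⟩
  have hlen : 1 ≤ x.length := List.length_pos_iff.mpr hx
  by_cases h3 : x.length < 3
  · rcases (by omega : x.length = 1 ∨ x.length = 2) with h | h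
    · obtain ⟨a, rfl⟩ := List.length_eq_one_iff.mp h
      obtain ⟨u, hu, hi⟩ : ∃ u ∈ Blist,
          u <:+: ([a] ++ [a] ++ (List.map (fun b => !b) [a]).reverse ++ [a]) := by
        cases a <;> decide
      exact K u hu hi
    · obtain ⟨a, b, rfl⟩ := List.length_eq_two.mp h
      obtain ⟨u, hu, hi⟩ : ∃ u ∈ Blist,
          u <:+: ([a,b] ++ [a,b] ++ (List.map (fun b => !b) [a,b]).reverse ++ [a,b]) := by
        cases a <;> cases b <;> decide
      exact K u hu hi
  · push_neg at h3
    have h2 : ∀ j, (hj : j + 2 < x.length) → x[j+2]'hj = !(x[j]'(by omega)) := by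
      intro j hj
      have T := triple x j hj
      cases c0 : x[j]'(by omega) <;> cases c1 : x[j+1]'(by omega) <;> cases c2 : x[j+2]'hj <;>
        rw [c0, c1, c2] at T <;>
        first
          | (simp [c0, c2]; done)
          | (refine absurd (T.trans hxF) (K _ ?_); decide)
          | (refine absurd ((show [false,false,false] <:+: (List.map (fun b => !b) x).reverse from by
                simpa using List.reverse_infix.mpr (T.map (fun b => !b))).trans hgF) (K _ ?_)
             decide)
    obtain ⟨a, ha⟩ : ∃ t, x[0]'(by omega) = t := ⟨_, rfl⟩
    obtain ⟨b, hb⟩ : ∃ t, x[1]'(by omega) = t := ⟨_, rfl⟩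
    have hp := xpat x a b (by omega) ha hb h2
    by_cases h16 : 16 ≤ x.length
    · have ht : x.take 16 = (List.range 16).map (patF a b) := take_eq x a b 16 h16 hp
      have hA : A13 <:+: (List.range 16).map (patF a b) := by
        cases a <;> cases b <;> decide
      rw [← ht] at hA
      exact K A13 (by decide) ((hA.trans (x.take_prefix 16).isInfix).trans hxF)
    · have hxeq : x = (List.range x.length).map (patF a b) := by
        have := take_eq x a b x.length (le_refl _) hp
        simpa using this
      obtain ⟨u, hu, hi⟩ : ∃ u ∈ Blist,
          u <:+: (x ++ x ++ (List.map (fun b => !b) x).reverse ++ x) := by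
        rcases (by omega : x.length = 3 ∨ x.length = 4 ∨ x.length = 5 ∨ x.length = 6 ∨
          x.length = 7 ∨ x.length = 8 ∨ x.length = 9 ∨ x.length = 10 ∨ x.length = 11 ∨
          x.length = 12 ∨ x.length = 13 ∨ x.length = 14 ∨ x.length = 15) with
          h|h|h|h|h|h|h|h|h|h|h|h|h <;>
        rw [h] at hxeq <;> rw [hxeq] <;> cases a <;> cases b <;> decide
      exact K u hu hi
end

section
/- Let v = ∏_{i≥0} 0·1^{2t_i+1}, where t_i is the Thue–Morse sequence. Then v contains no factor of the form x·x·x·x with x a nonempty binary word. -/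
/-- Block `0 1^(2 t_i+1)` of the word **v**. -/
def vBlock (i : Nat) : List Bool := [false] ++ List.replicate (2 * tm i + 1) true

def vPrefix (n : Nat) : List Bool := ((List.range n).map vBlock).flatten

/-- `L` is a factor of the infinite word **v**. -/
def IsFactorV (L : List Bool) : Prop := ∃ n, L <:+: vPrefix n


lemma tm_lt (n : ℕ) : tm n < 2 := Nat.mod_lt _ (by norm_num)

lemma tm_two_mul (n : ℕ) : tm (2 * n) = tm n := by
  rcases Nat.eq_zero_or_pos n with h | h
  · simp [h]
  · unfold tm
    rw [Nat.digits_def' (by norm_num : 1 < 2) (by omega)]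
    simp [Nat.mul_div_cancel_left _ (by norm_num : 0 < 2), Nat.mul_mod_right]

lemma tm_two_mul_add_one (n : ℕ) : tm (2 * n + 1) = (tm n + 1) % 2 := by
  unfold tm
  rw [Nat.digits_def' (by norm_num : 1 < 2) (by omega)]
  have h1 : (2 * n + 1) % 2 = 1 := by omega
  have h2 : (2 * n + 1) / 2 = n := by omega
  rw [h1, h2]
  simp [Nat.add_mod, Nat.add_comm]

lemma tm_no_three (n : ℕ) : tm n ≠ tm (n + 1) ∨ tm (n + 1) ≠ tm (n + 2) := by
  rcases Nat.even_or_odd n with ⟨a, ha⟩ | ⟨a, ha⟩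
  · left
    have h1 : tm n = tm a := by rw [ha, ← two_mul, tm_two_mul]
    have h2 : tm (n + 1) = (tm a + 1) % 2 := by
      rw [show n + 1 = 2 * a + 1 by omega, tm_two_mul_add_one]
    have := tm_lt a
    omega
  · right
    have h1 : tm (n + 1) = tm (a + 1) := by
      rw [show n + 1 = 2 * (a + 1) by omega, tm_two_mul]
    have h2 : tm (n + 2) = (tm (a + 1) + 1) % 2 := by
      rw [show n + 2 = 2 * (a + 1) + 1 by omega, tm_two_mul_add_one]
    have := tm_lt (a + 1)
    omega

lemma tm_no_overlap : ∀ k, 1 ≤ k → ∀ m, ¬ (∀ j ≤ k, tm (m + j) = tm (m + j + k)) := by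
  intro k
  induction k using Nat.strong_induction_on with
  | _ k IH =>
    intro hk m H
    rcases Nat.lt_or_ge k 2 with hk1 | hk2
    · -- k = 1
      have hk' : k = 1 := by omega
      subst hk'
      have h0 := H 0 (by omega)
      have h1 := H 1 (by omega)
      rcases tm_no_three m with h | h
      · exact h (by simpa using h0)
      · exact h (by rw [show m + 1 + 1 = m + 1 + 1 from rfl] at h1; simpa [Nat.add_assoc] using h1)
    rcases Nat.even_or_odd k with ⟨k', hkk⟩ | ⟨c, hkc⟩
    · -- k even, k = 2k'
      have hk' : k = 2 * k' := by omega
      have hk'1 : 1 ≤ k' := by omega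
      rcases Nat.even_or_odd m with ⟨m', hmm⟩ | ⟨m', hmm⟩
      · have hm' : m = 2 * m' := by omega
        apply IH k' (by omega) hk'1 m'
        intro j' hj'
        have h := H (2 * j') (by omega)
        have h2 : tm (2 * (m' + j')) = tm (2 * (m' + j' + k')) := by
          convert h using 2 <;> omega
        rw [tm_two_mul, tm_two_mul] at h2
        exact h2
      · have hm' : m = 2 * m' + 1 := by omega
        apply IH k' (by omega) hk'1 m'
        intro j' hj'
        have h := H (2 * j') (by omega)
        have h2 : tm (2 * (m' + j') + 1) = tm (2 * (m' + j' + k') + 1) := by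
          convert h using 2 <;> omega
        rw [tm_two_mul_add_one, tm_two_mul_add_one] at h2
        rename' h2 => h
        have := tm_lt (m' + j')
        have := tm_lt (m' + j' + k')
        omega
    · -- k odd, k = 2c+1, c ≥ 1
      have hkc' : k = 2 * c + 1 := by omega
      have hc1 : 1 ≤ c := by omega
      -- derived relations
      have E : ∀ a, m ≤ 2 * a → 2 * a ≤ m + k → tm a = (tm (a + c) + 1) % 2 := by
        intro a h1 h2
        have h := H (2 * a - m) (by omega)
        have h2 : tm (2 * a) = tm (2 * (a + c) + 1) := by
          convert h using 2 <;> omega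
        rw [tm_two_mul, tm_two_mul_add_one] at h2
        exact h2
      have O : ∀ a, m ≤ 2 * a + 1 → 2 * a + 1 ≤ m + k → tm (a + c + 1) = (tm a + 1) % 2 := by
        intro a h1 h2
        have h := H (2 * a + 1 - m) (by omega)
        have h2 : tm (2 * a + 1) = tm (2 * (a + c + 1)) := by
          convert h using 2 <;> omega
        rw [tm_two_mul, tm_two_mul_add_one] at h2
        exact h2.symm
      by_cases hsp : k = 3 ∧ m % 2 = 1
      · -- special case
        obtain ⟨hk3, hmo⟩ := hsp
        have hc : c = 1 := by omega
        subst hc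
        obtain ⟨b, hb⟩ : ∃ b, m = 2 * b + 1 := ⟨m / 2, by omega⟩
        set a := b + 1 with ha
        have e1 := E a (by omega) (by omega)
        have e2 := O a (by omega) (by omega)
        have e3 := E (a + 1) (by omega) (by omega)
        have := tm_lt a; have := tm_lt (a + 1); have := tm_lt (a + 2)
        rw [show a + 1 + 1 = a + 2 by omega] at e2 e3
        omega
      · -- general case: 4 consecutive positions 2a..2a+3 inside [m, m+k]
        obtain ⟨a, h1, h2⟩ : ∃ a, m ≤ 2 * a ∧ 2 * a + 3 ≤ m + k := by
          rcases Nat.even_or_odd m with ⟨m', hmm⟩ | ⟨m', hmm⟩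
          · exact ⟨m', by omega⟩
          · have hk5 : 5 ≤ k := by
              rcases Nat.lt_or_ge k 5 with h | h
              · exfalso; exact hsp ⟨by omega, by omega⟩
              · exact h
            exact ⟨m' + 1, by omega, by omega⟩
        have e1 := E a (by omega) (by omega)
        have e2 := O a (by omega) (by omega)
        have e3 := E (a + 1) (by omega) (by omega)
        have e4 := O (a + 1) (by omega) (by omega)
        have ht1 : tm (a + c) = tm (a + c + 1) := by
          have := tm_lt a; have := tm_lt (a + c); have := tm_lt (a + c + 1); omega
        have ht2 : tm (a + c + 1) = tm (a + c + 2) := by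
          rw [show a + 1 + c = a + c + 1 by omega] at e3 e4
          rw [show a + c + 1 + 1 = a + c + 2 by omega] at e4
          have := tm_lt (a + 1); have := tm_lt (a + c + 1); have := tm_lt (a + c + 2); omega
        rcases tm_no_three (a + c) with h | h
        · exact h ht1
        · exact h (by rw [show a + c + 1 + 1 = a + c + 2 by omega]; exact ht2)

def Spos : ℕ → ℕ
  | 0 => 0
  | i + 1 => Spos i + (2 * tm i + 2)

lemma vBlock_length (i : ℕ) : (vBlock i).length = 2 * tm i + 2 := by
  simp [vBlock]

lemma vPrefix_succ (n : ℕ) : vPrefix (n + 1) = vPrefix n ++ vBlock n := by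
  simp [vPrefix, List.range_succ]

lemma vPrefix_length (n : ℕ) : (vPrefix n).length = Spos n := by
  induction n with
  | zero => rfl
  | succ n ih => rw [vPrefix_succ, List.length_append, ih, vBlock_length]; rfl

lemma Spos_succ (i : ℕ) : Spos (i + 1) = Spos i + (2 * tm i + 2) := rfl

lemma Spos_ge (n : ℕ) : 2 * n ≤ Spos n := by
  induction n with
  | zero => simp [Spos]
  | succ n ih => rw [Spos_succ]; omega

lemma Spos_gap (i : ℕ) : Spos i + 2 ≤ Spos (i + 1) ∧ Spos (i + 1) ≤ Spos i + 4 := by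
  rw [Spos_succ]; have := tm_lt i; omega

lemma Spos_mono : StrictMono Spos := by
  apply strictMono_nat_of_lt_succ
  intro n; have := Spos_gap n; omega

lemma vPrefix_prefix {m n : ℕ} (h : m ≤ n) : vPrefix m <+: vPrefix n := by
  induction n with
  | zero => simp_all
  | succ n ih =>
    rcases Nat.eq_or_lt_of_le h with h' | h'
    · subst h'; exact List.prefix_refl _
    · exact (ih (by omega)).trans (by rw [vPrefix_succ]; exact List.prefix_append _ _)

def V (j : ℕ) : Bool := (vPrefix (j + 1)).getD j true

lemma getElem_vPrefix {n j : ℕ} (h : j < (vPrefix n).length) : (vPrefix n)[j] = V j := by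
  have hj : j < (vPrefix (j + 1)).length := by
    rw [vPrefix_length]; have := Spos_ge (j + 1); omega
  have h1 : (vPrefix n)[j] = (vPrefix (max n (j + 1)))[j]'
      (lt_of_lt_of_le h (vPrefix_prefix (le_max_left _ _)).length_le) :=
    (vPrefix_prefix (le_max_left n (j + 1))).getElem h
  have h2 : (vPrefix (j + 1))[j] = (vPrefix (max n (j + 1)))[j]'
      (lt_of_lt_of_le hj (vPrefix_prefix (le_max_right _ _)).length_le) :=
    (vPrefix_prefix (le_max_right n (j + 1))).getElem hj
  rw [h1, V, List.getD_eq_getElem _ _ hj, h2]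

lemma V_in_block {i j : ℕ} (h1 : Spos i ≤ j) (h2 : j < Spos (i + 1)) :
    V j = if j = Spos i then false else true := by
  have hlen : j < (vPrefix (i + 1)).length := by rw [vPrefix_length]; exact h2
  rw [← getElem_vPrefix hlen]
  have he := List.getElem_of_eq (vPrefix_succ i) hlen
  rw [he, List.getElem_append_right (by rw [vPrefix_length]; exact h1)]
  rcases Nat.eq_or_lt_of_le h1 with h | h
  · have : j - (vPrefix i).length = 0 := by rw [vPrefix_length]; omega
    rw [if_pos h.symm]
    simp [this, vBlock]
  · rw [if_neg (by omega)]
    have hr : ∃ r, j - (vPrefix i).length = r + 1 := by rw [vPrefix_length]; exact ⟨j - Spos i - 1, by omega⟩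
    obtain ⟨r, hr⟩ := hr
    have hrlt : r < 2 * tm i + 1 := by
      have := vBlock_length i
      have h2' : j - (vPrefix i).length < (vBlock i).length := by
        rw [vPrefix_length, vBlock_length]; rw [Spos_succ] at h2; omega
      omega
    simp only [hr, vBlock, List.singleton_append, List.getElem_cons_succ]
    exact List.getElem_replicate ..

lemma V_Spos (i : ℕ) : V (Spos i) = false := by
  rw [V_in_block (le_refl _) (by have := Spos_gap i; omega)]; simp

lemma V_true {i j : ℕ} (h1 : Spos i < j) (h2 : j < Spos (i + 1)) : V j = true := by
  rw [V_in_block (by omega) h2, if_neg (by omega)]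

lemma exists_block (j : ℕ) : ∃ i, Spos i ≤ j ∧ j < Spos (i + 1) := by
  induction j with
  | zero => exact ⟨0, le_refl _, by have := Spos_gap 0; simp [Spos] at *⟩
  | succ j ih =>
    obtain ⟨i, h1, h2⟩ := ih
    rcases Nat.lt_or_ge (j + 1) (Spos (i + 1)) with h | h
    · exact ⟨i, by omega, h⟩
    · exact ⟨i + 1, by omega, by have := Spos_gap (i + 1); omega⟩

lemma V_false {j : ℕ} (h : V j = false) : ∃ i, Spos i = j := by
  obtain ⟨i, h1, h2⟩ := exists_block j
  refine ⟨i, ?_⟩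
  by_contra hne
  rw [V_true (by omega) h2] at h
  simp at h


theorem stmt11 (x : List Bool) (hx : x ≠ []) :
    ¬ IsFactorV (x ++ x ++ x ++ x) := by
  rintro ⟨n, u, w, hw⟩
  set L := x.length with hLdef
  have hL : 1 ≤ L := by
    rw [hLdef]; exact List.length_pos_iff.mpr hx
  set q : List Bool := x ++ x ++ x ++ x with hq
  have hqlen : q.length = 4 * L := by simp [hq]; omega
  set p := u.length with hp
  -- value of V inside the occurrence of q
  have hV : ∀ j (hj : j < 4 * L), V (p + j) = q[j]'(by omega) := by
    intro j hj
    have hlen : p + j < (vPrefix n).length := by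
      rw [← hw]; simp only [List.length_append]; omega
    rw [← getElem_vPrefix hlen]
    rw [List.getElem_of_eq hw.symm hlen]
    rw [List.getElem_append_left (by simp only [List.length_append]; omega)]
    rw [List.getElem_append_right (by omega)]
    congr 1
    omega
  -- periodicity of V on the window
  have hper : ∀ a, p ≤ a → a + L < p + 4 * L → V a = V (a + L) := by
    intro a h1 h2
    set j := a - p with hj
    have hjL : j + L < 4 * L := by omega
    have e1 : V a = q[j]'(by omega) := by
      have h := hV j (by omega); rwa [show p + j = a by omega] at h
    have e2 : V (a + L) = q[j + L]'(by omega) := by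
      have h := hV (j + L) (by omega); rwa [show p + (j + L) = a + L by omega] at h
    have hq4 : q = x ++ (x ++ x ++ x) := by simp [hq]
    have e3 : q[j + L]'(by omega) = (x ++ x ++ x)[j]'(by simp only [List.length_append]; omega) := by
      rw [List.getElem_of_eq hq4 (by omega)]
      rw [List.getElem_append_right (by omega)]
      congr 1
      omega
    have e4 : q[j]'(by omega) = (x ++ x ++ x)[j]'(by simp only [List.length_append]; omega) := by
      rw [List.getElem_of_eq hq (by omega)]
      rw [List.getElem_append_left (by simp only [List.length_append]; omega)]
    rw [e1, e2, e3, e4]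
  by_cases hfx : false ∈ x
  · -- x contains a zero
    obtain ⟨j₀, hj₀, hxj₀⟩ := List.mem_iff_getElem.mp hfx
    have hVQ : V (p + j₀) = false := by
      rw [hV j₀ (by omega)]
      rw [List.getElem_of_eq hq (by omega)]
      rw [List.getElem_append_left (by simp only [List.length_append]; omega)]
      rw [List.getElem_append_left (by simp only [List.length_append]; omega)]
      rw [List.getElem_append_left (by omega)]
      exact hxj₀
    obtain ⟨i₀, hi₀⟩ := V_false hVQ
    set Q := p + j₀ with hQ
    have per' : ∀ a, Q ≤ a → a ≤ Q + 2 * L → V a = V (a + L) := by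
      intro a h1 h2
      exact hper a (by omega) (by omega)
    -- first return
    have hQL : ∃ i₁, Spos i₁ = Q + L := by
      apply V_false
      rw [← per' Q (le_refl _) (by omega), ← hi₀]
      exact V_Spos i₀
    obtain ⟨i₁, hi₁⟩ := hQL
    have hi₀₁ : i₀ < i₁ := by
      have := Spos_mono.lt_iff_lt (a := i₀) (b := i₁)
      omega
    set d := i₁ - i₀ with hd
    have hd1 : 1 ≤ d := by omega
    have hi₁' : i₁ = i₀ + d := by omega
    -- shift lemma
    have shift : ∀ j, Spos (i₀ + j) ≤ Q + 2 * L → Spos (i₀ + j + d) = Spos (i₀ + j) + L := by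
      intro j
      induction j with
      | zero => intro _; rw [Nat.add_zero, ← hi₁', hi₁, hi₀]
      | succ j ih =>
        intro hle
        rw [show i₀ + (j + 1) = i₀ + j + 1 by omega] at hle ⊢
        have hmono : Spos (i₀ + j) < Spos (i₀ + j + 1) := Spos_mono (by omega)
        have hE : Spos (i₀ + j + d) = Spos (i₀ + j) + L := ih (by omega)
        have hQle : Q ≤ Spos (i₀ + j) := by
          rw [← hi₀]; exact Spos_mono.le_iff_le.mpr (by omega)
        have hQle1 : Q ≤ Spos (i₀ + j + 1) := by omega
        have hVnext : V (Spos (i₀ + j + 1) + L) = false := by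
          rw [← per' _ hQle1 hle]
          exact V_Spos _
        obtain ⟨i', hi'⟩ := V_false hVnext
        have hi'gt : i₀ + j + d < i' := by
          have := Spos_mono.lt_iff_lt (a := i₀ + j + d) (b := i')
          omega
        have hi'eq : i' = i₀ + j + d + 1 := by
          by_contra hne
          have h2' : i₀ + j + d + 2 ≤ i' := by omega
          have hb1 : Spos (i₀ + j) + L < Spos (i₀ + j + d + 1) := by
            rw [← hE]; exact Spos_mono (by omega)
          have hb2 : Spos (i₀ + j + d + 1) < Spos (i₀ + j + 1) + L := by
            rw [← hi']
            have := Spos_mono.lt_iff_lt (a := i₀ + j + d + 1) (b := i')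
            omega
          set b := Spos (i₀ + j + d + 1) - L with hbdef
          have hbt : V b = true := V_true (i := i₀ + j) (by omega) (by omega)
          have hVb : V (Spos (i₀ + j + d + 1)) = false := V_Spos _
          rw [show Spos (i₀ + j + d + 1) = b + L by omega,
              ← per' b (by omega) (by omega)] at hVb
          rw [hbt] at hVb
          exact Bool.noConfusion hVb
        rw [show i₀ + j + 1 + d = i₀ + j + d + 1 by omega, ← hi'eq, hi']
    -- conclude: overlap in tm
    have hSd : Spos (i₀ + d) = Q + L := by rw [← hi₁']; exact hi₁
    have hS2 : Spos (i₀ + d + d) = Q + 2 * L := by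
      have := shift d (by omega)
      omega
    have htm : ∀ j ≤ d, tm (i₀ + j) = tm (i₀ + j + d) := by
      intro j hj
      have hub : Spos (i₀ + j + 1) ≤ Q + 2 * L := by
        have := Spos_mono.le_iff_le (a := i₀ + j + 1) (b := i₀ + d + d)
        omega
      have hub0 : Spos (i₀ + j) ≤ Q + 2 * L := by
        have := Spos_mono (show i₀ + j < i₀ + j + 1 by omega)
        omega
      have s1 := shift j hub0
      have s2 := shift (j + 1) (by rw [show i₀ + (j + 1) = i₀ + j + 1 by omega]; exact hub)
      rw [show i₀ + (j + 1) + d = i₀ + j + d + 1 by omega,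
          show i₀ + (j + 1) = i₀ + j + 1 by omega] at s2
      have g1 := Spos_succ (i₀ + j)
      have g2 := Spos_succ (i₀ + j + d)
      omega
    exact tm_no_overlap d hd1 i₀ htm
  · -- x is all ones
    have hall : ∀ j, j < 4 * L → V (p + j) = true := by
      intro j hj
      rw [hV j hj]
      have hmem : q[j]'(by omega) ∈ q := List.getElem_mem _
      have hbx : ∀ b : Bool, b ∈ q → b ∈ x := by
        intro b hb
        rw [hq] at hb
        simp only [List.mem_append] at hb
        tauto
      cases hqj : q[j]'(by omega)
      · have := hbx _ hmem
        rw [hqj] at this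
        exact absurd this hfx
      · rfl
    obtain ⟨i, h1, h2⟩ := exists_block p
    rcases Nat.eq_or_lt_of_le h1 with h | h
    · have hPf := V_Spos i
      rw [h] at hPf
      have h0 := hall 0 (by omega)
      rw [Nat.add_zero] at h0
      rw [h0] at hPf
      exact Bool.noConfusion hPf
    · have hgap := Spos_gap i
      have hfalse := V_Spos (i + 1)
      have htrue := hall (Spos (i + 1) - p) (by omega)
      rw [show p + (Spos (i + 1) - p) = Spos (i + 1) by omega] at htrue
      rw [htrue] at hfalse
      exact Bool.noConfusion hfalse
end

section
/- Let u = ∏_{i≥0} 0·1^{t_i+2}, with t_i the Thue–Morse sequence. Then u contains no factor of the form x·x̄·x·x̄, where x is a nonempty binary word and x̄ is its letterwise complement. -/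
/-- Block `0 1^(t_i+2)` of the word **u**. -/
def uBlock (i : Nat) : List Bool := [false] ++ List.replicate (tm i + 2) true

def uPrefix (n : Nat) : List Bool := ((List.range n).map uBlock).flatten

/-- `L` is a factor of the infinite word **u**. -/
def IsFactorU (L : List Bool) : Prop := ∃ n, L <:+: uPrefix n

/-- Every `false` is not followed (at distance 1 or 2) by a `false`. -/
def Loc (L : List Bool) : Prop :=
  ∀ i, L[i]? = some false → L[i+1]? ≠ some false ∧ L[i+2]? ≠ some false

lemma loc_tail {a : Bool} {L : List Bool} (h : Loc (a :: L)) : Loc L := by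
  intro i hi
  have := h (i+1) (by simpa using hi)
  simpa using this

lemma loc_take {L : List Bool} (h : Loc L) (k : ℕ) : Loc (L.take k) := by
  intro i hi
  rw [List.getElem?_take] at hi
  split at hi
  · have := h i hi
    constructor <;> intro hc <;> rw [List.getElem?_take] at hc <;> split at hc <;>
      simp_all
  · simp at hi

lemma loc_suffix {L M : List Bool} (h : L <:+ M) (hM : Loc M) : Loc L := by
  obtain ⟨t, rfl⟩ := h
  induction t with
  | nil => simpa using hM
  | cons a t ih => exact ih (loc_tail hM)

lemma loc_infix {L M : List Bool} (h : L <:+: M) (hM : Loc M) : Loc L := by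
  obtain ⟨p, s, rfl⟩ := h
  have h1 : Loc (L ++ s) := loc_suffix ⟨p, by simp⟩ hM
  have : L = (L ++ s).take L.length := by simp
  rw [this]
  exact loc_take h1 _

lemma uPrefix_succ (n : ℕ) : uPrefix (n+1) = uPrefix n ++ uBlock n := by
  simp [uPrefix, List.range_succ]

/-- Strong structural lemma: in `uPrefix n`, every `false` is followed by two `true`s. -/
lemma locS (n : ℕ) : ∀ i, (uPrefix n)[i]? = some false →
    (uPrefix n)[i+1]? = some true ∧ (uPrefix n)[i+2]? = some true := by
  induction n with
  | zero => intro i hi; simp [uPrefix] at hi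
  | succ n ih =>
    intro i hi
    rw [uPrefix_succ] at hi ⊢
    rcases lt_or_ge i (uPrefix n).length with hlt | hge
    · rw [List.getElem?_append_left hlt] at hi
      obtain ⟨h1, h2⟩ := ih i hi
      have l1 : i + 1 < (uPrefix n).length := by
        by_contra hc
        rw [List.getElem?_eq_none (by omega)] at h1; simp at h1
      have l2 : i + 2 < (uPrefix n).length := by
        by_contra hc
        rw [List.getElem?_eq_none (by omega)] at h2; simp at h2
      rw [List.getElem?_append_left l1, List.getElem?_append_left l2]
      exact ⟨h1, h2⟩
    · rw [List.getElem?_append_right hge] at hi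
      -- false only at position 0 of the block
      have hb : i - (uPrefix n).length = 0 := by
        by_contra hc
        have : ∃ j, i - (uPrefix n).length = j + 1 := ⟨i - (uPrefix n).length - 1, by omega⟩
        obtain ⟨j, hj⟩ := this
        rw [hj] at hi
        simp only [uBlock, List.cons_append, List.nil_append, List.getElem?_cons_succ] at hi
        rcases lt_or_ge j (tm n + 2) with hjl | hjl
        · rw [List.getElem?_replicate, if_pos hjl] at hi; simp at hi
        · rw [List.getElem?_eq_none (by simp; omega)] at hi; simp at hi
      have hieq : i = (uPrefix n).length := by omega
      subst hieq
      rw [List.getElem?_append_right (by omega), List.getElem?_append_right (by omega)]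
      have e1 : (uPrefix n).length + 1 - (uPrefix n).length = 1 := by omega
      have e2 : (uPrefix n).length + 2 - (uPrefix n).length = 2 := by omega
      rw [e1, e2]
      simp only [uBlock, List.cons_append, List.nil_append, List.getElem?_cons_succ]
      constructor <;> rw [List.getElem?_replicate, if_pos (by omega)]

lemma loc_uPrefix (n : ℕ) : Loc (uPrefix n) := by
  intro i hi
  obtain ⟨h1, h2⟩ := locS n i hi
  constructor <;> simp_all

/-- Counting: in a `Loc` list, at most (length+2)/3 falses. -/
lemma count_bound : ∀ L : List Bool, Loc L → 3 * L.count false ≤ L.length + 2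
  | [], _ => by simp
  | true :: T, h => by
      have := count_bound T (loc_tail h)
      simp only [List.count_cons, List.length_cons]
      norm_num
      omega
  | [false], _ => by simp
  | [false, b], h => by
      have hb := (h 0 (by simp)).1
      simp at hb
      subst hb
      simp [List.count_cons]
  | false :: b :: c :: T, h => by
      have hb := (h 0 (by simp)).1
      have hc := (h 0 (by simp)).2
      simp at hb hc
      subst hb; subst hc
      have hT : Loc T := loc_tail (loc_tail (loc_tail h))
      have := count_bound T hT
      simp only [List.count_cons, List.length_cons]
      norm_num
      omega

lemma count_negmap (x : List Bool) :
    (List.map (fun b => !b) x).count false = x.count true := by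
  induction x with
  | nil => simp
  | cons a t ih => cases a <;> simp [List.count_cons, ih]

lemma count_split (x : List Bool) : x.count false + x.count true = x.length := by
  induction x with
  | nil => simp
  | cons a t ih => cases a <;> simp [List.count_cons] <;> omega

theorem stmt16 (x : List Bool) (hx : x ≠ []) :
    ¬ IsFactorU (x ++ (List.map (fun b => !b) x) ++ x ++ (List.map (fun b => !b) x)) := by
  rintro ⟨n, hinf⟩
  set y := List.map (fun b => !b) x with hy
  have hloc : Loc (x ++ y ++ x ++ y) := loc_infix hinf (loc_uPrefix n)
  have hcount := count_bound _ hloc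
  have hlen : y.length = x.length := by simp [hy]
  have hcy : y.count false = x.count true := count_negmap x
  have hcs := count_split x
  simp only [List.count_append, List.length_append] at hcount
  have hm : x.length = 1 := by
    have hpos : 0 < x.length := List.length_pos_iff.mpr hx
    omega
  obtain ⟨b, rfl⟩ := List.length_eq_one_iff.mp hm
  cases b
  · -- x = [false], word = [false, true, false, true]
    have := (hloc 0 (by simp [hy])).2
    simp [hy] at this
  · -- x = [true], word = [true, false, true, false]
    have := (hloc 1 (by simp [hy])).2
    simp [hy] at this
end
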